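/- arXiv:2509.17376 — 2 statements merged into one kernel-verified Lean document; each statement's English description precedes it below -/
import Mathlib

section
/- Wirtinger inequality: for a real 2-form η on an inner product space of dimension 2n with comass ‖η‖* ≤ 1, the n-fold wedge power satisfies ‖ηⁿ‖* ≤ n!, i.e., the comass of ηⁿ is at most n! times the n-th power of the comass of η. -/
/-! Write `η (x, y) = ⟪J x, y⟫` with `J` skew-adjoint. An eigenvector `u` of the symmetric operator
`J²` spans, together with `J u`, a `J`-invariant plane, so induction on the dimension gives an
orthonormal frame `e` in which `η` only pairs `e₂ₖ` with `e₂ₖ₊₁`, and `|η (e₂ₖ, e₂ₖ₊₁)| ≤ ‖η‖*`.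
Expanding `η ∧ ηⁿ` on such a frame as a sum over permutations, only the terms placing `η` on one of
the `n + 1` blocks survive, and each is controlled by `ηⁿ` on the remaining blocks; by induction
`|ηⁿ(e)| ≤ n! ‖η‖*ⁿ`. A top-degree form takes the same absolute value on all orthonormal frames,
since these differ by an orthogonal matrix, of determinant `±1`. -/

open scoped TensorProduct

variable {E : Type*} [NormedAddCommGroup E] [InnerProductSpace ℝ E]

/-- The wedge product of real-valued alternating forms (the usual de Rham wedge, via the
shuffle sum `domCoprod`). -/
noncomputable def wedgeForm {a b : ℕ} (ω : E [⋀^Fin a]→ₗ[ℝ] ℝ) (η : E [⋀^Fin b]→ₗ[ℝ] ℝ) :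
    E [⋀^Fin (a + b)]→ₗ[ℝ] ℝ :=
  AlternatingMap.domDomCongr finSumFinEquiv
    ((TensorProduct.lid ℝ ℝ).toLinearMap.compAlternatingMap (ω.domCoprod η))

/-- The `n`-fold wedge power `η ∧ ⋯ ∧ η` of a 2-form `η`. -/
noncomputable def wedgePow (η : E [⋀^Fin 2]→ₗ[ℝ] ℝ) : (n : ℕ) → E [⋀^Fin (2 * n)]→ₗ[ℝ] ℝ
  | 0 => AlternatingMap.domDomCongr (finCongr (by omega))
      (AlternatingMap.constOfIsEmpty ℝ E (Fin 0) 1)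
  | n + 1 => AlternatingMap.domDomCongr (finCongr (by ring))
      (wedgeForm η (wedgePow η n))

/-- The comass of a `k`-form: the supremum of its values on orthonormal `k`-tuples. -/
noncomputable def comass {k : ℕ} (ω : E [⋀^Fin k]→ₗ[ℝ] ℝ) : ℝ :=
  sSup {r : ℝ | ∃ v : Fin k → E, Orthonormal ℝ v ∧ r = ω v}

open scoped RealInnerProductSpace
open Module Submodule

namespace AlternatingMap

variable {R M N : Type*} [CommSemiring R] [AddCommMonoid M] [Module R M]

theorem map_vecCons_self [AddCommMonoid N] [Module R N] (f : M [⋀^Fin 2]→ₗ[R] N) (x : M) :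
    f ![x, x] = 0 :=
  f.map_eq_zero_of_eq _ (i := 0) (j := 1) rfl zero_ne_one

theorem map_vecCons_swap [AddCommGroup N] [Module R N] (f : M [⋀^Fin 2]→ₗ[R] N) (x y : M) :
    f ![y, x] = -f ![x, y] := by
  rw [← f.map_swap ![x, y] zero_ne_one, Matrix.cons_cons_comp_swap_zero_one]

def toBilin (f : M [⋀^Fin 2]→ₗ[R] R) : M →ₗ[R] M →ₗ[R] R :=
  LinearMap.mk₂ R (fun x y => f ![x, y])
    (fun x x' y => f.map_vecCons_add ![y] x x')
    (fun c x y => f.map_vecCons_smul ![y] c x)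
    (fun x y y' => (f.curryLeft x).map_vecCons_add ![] y y')
    (fun c x y => (f.curryLeft x).map_vecCons_smul ![] c y)

theorem abs_map_comp_perm {M ι : Type*} [AddCommGroup M] [Module ℝ M] [Fintype ι] [DecidableEq ι]
    (f : M [⋀^ι]→ₗ[ℝ] ℝ) (v : ι → M) (π : Equiv.Perm ι) :
    |f (v ∘ π)| = |f v| := by
  rcases Int.units_eq_one_or (Equiv.Perm.sign π) with h | h <;> simp [f.map_perm, h]

end AlternatingMap

section SkewOperator

variable [FiniteDimensional ℝ E]

noncomputable def skewOperator (η : E [⋀^Fin 2]→ₗ[ℝ] ℝ) : E →ₗ[ℝ] E :=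
  (InnerProductSpace.toDual ℝ E).symm.toLinearEquiv.toLinearMap ∘ₗ
    LinearMap.toContinuousLinearMap.toLinearMap ∘ₗ η.toBilin

theorem inner_skewOperator (η : E [⋀^Fin 2]→ₗ[ℝ] ℝ) (x y : E) :
    ⟪skewOperator η x, y⟫ = η ![x, y] :=
  InnerProductSpace.toDual_symm_apply

theorem inner_skewOperator_left (η : E [⋀^Fin 2]→ₗ[ℝ] ℝ) (x y : E) :
    ⟪skewOperator η x, y⟫ = -⟪x, skewOperator η y⟫ := by
  rw [inner_skewOperator, ← neg_neg (η ![x, y]), ← η.map_vecCons_swap, ← inner_skewOperator,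
    real_inner_comm]

end SkewOperator

theorem exists_invariant_plane_of_skew [FiniteDimensional ℝ E] {J : E →ₗ[ℝ] E}
    (hJ : ∀ x y, ⟪J x, y⟫ = -⟪x, J y⟫) (hE : 1 < finrank ℝ E) :
    ∃ W : Submodule ℝ E, finrank ℝ W = 2 ∧ ∀ w ∈ W, J w ∈ W := by
  suffices ∃ x y : E, LinearIndependent ℝ ![x, y] ∧
      J x ∈ span ℝ (Set.range ![x, y]) ∧ J y ∈ span ℝ (Set.range ![x, y]) by
    obtain ⟨x, y, hxy, hJx, hJy⟩ := this
    refine ⟨span ℝ (Set.range ![x, y]), by simpa using finrank_span_eq_card hxy, fun w hw => ?_⟩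
    have hmap : (span ℝ (Set.range ![x, y])).map J ≤ span ℝ (Set.range ![x, y]) := by
      rw [map_span_le]
      rintro _ ⟨i, rfl⟩
      fin_cases i
      exacts [hJx, hJy]
    exact hmap (mem_map_of_mem hw)
  have hJJ : (J ∘ₗ J).IsSymmetric := fun x y => by
    simp only [LinearMap.comp_apply, hJ, neg_neg]
  set b := hJJ.eigenvectorBasis rfl
  by_cases hb : ∃ i, J (b i) ≠ 0
  · -- `J (J (b i))` is a multiple of `b i`, so `b i` and `J (b i)` span an invariant plane
    obtain ⟨i, hi⟩ := hb
    refine ⟨b i, J (b i), ?_, subset_span ⟨1, rfl⟩, ?_⟩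
    · refine linearIndependent_of_ne_zero_of_inner_eq_zero ?_ ?_
      · simpa [Fin.forall_fin_two] using ⟨b.orthonormal.ne_zero i, hi⟩
      · have h : ⟪b i, J (b i)⟫ = 0 := by
          linarith [hJ (b i) (b i), real_inner_comm (b i) (J (b i))]
        intro j k hjk
        fin_cases j <;> fin_cases k
        exacts [absurd rfl hjk, h, real_inner_comm (J (b i)) (b i) ▸ h, absurd rfl hjk]
    · have := hJJ.apply_eigenvectorBasis rfl i
      simp only [LinearMap.comp_apply] at this
      rw [this]
      exact smul_mem _ _ (subset_span ⟨0, rfl⟩)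
  · -- otherwise `J = 0` and every plane is invariant
    push Not at hb
    have hJ0 : J = 0 := b.toBasis.ext fun i => by simpa using hb i
    obtain ⟨y, hxy⟩ := exists_linearIndependent_pair_of_one_lt_finrank hE
      (b.orthonormal.ne_zero ⟨0, by omega⟩)
    exact ⟨_, y, hxy, by simp [hJ0], by simp [hJ0]⟩

theorem Orthonormal.fin_append {m k : ℕ} {u : Fin m → E} {v : Fin k → E}
    (hu : Orthonormal ℝ u) (hv : Orthonormal ℝ v) (huv : ∀ i j, ⟪u i, v j⟫ = 0) :
    Orthonormal ℝ (Fin.append u v) := by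
  rw [orthonormal_iff_ite] at hu hv ⊢
  intro i j
  induction i using Fin.addCases <;> induction j using Fin.addCases <;>
    simp [hu, hv, huv, real_inner_comm (u _), Fin.ext_iff] <;> omega

/-- For an orthonormal frame `v` this is the normal form `η = ∑ₖ λₖ v²ᵏ ∧ v²ᵏ⁺¹`. -/
def IsBlockDiagonal {m : ℕ} (η : E [⋀^Fin 2]→ₗ[ℝ] ℝ) (v : Fin m → E) : Prop :=
  ∀ i j : Fin m, (i : ℕ) / 2 ≠ (j : ℕ) / 2 → η ![v i, v j] = 0

theorem exists_orthonormal_isBlockDiagonal [FiniteDimensional ℝ E] {n : ℕ}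
    (hE : finrank ℝ E = 2 * n) (η : E [⋀^Fin 2]→ₗ[ℝ] ℝ) :
    ∃ e : Fin (2 * n) → E, Orthonormal ℝ e ∧ IsBlockDiagonal η e := by
  induction n generalizing E with
  | zero => exact ⟨Fin.elim0, ⟨fun i => i.elim0, fun i => i.elim0⟩, fun i => i.elim0⟩
  | succ n ih =>
    obtain ⟨W, hW, hJW⟩ := exists_invariant_plane_of_skew (inner_skewOperator_left η) (by omega)
    have hisol : ∀ w ∈ W, ∀ x ∈ Wᗮ, η ![w, x] = 0 := fun w hw x hx => by
      rw [← inner_skewOperator]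
      exact inner_right_of_mem_orthogonal (hJW w hw) hx
    have hW' : finrank ℝ Wᗮ = 2 * n := by
      have := W.finrank_add_finrank_orthogonal
      omega
    obtain ⟨e', he', hblock⟩ := ih hW' (η.compLinearMap Wᗮ.subtype)
    have hrestrict (x y : Wᗮ) : (η.compLinearMap Wᗮ.subtype) ![x, y] = η ![↑x, ↑y] :=
      congrArg η (by ext i; fin_cases i <;> rfl)
    let w := (stdOrthonormalBasis ℝ W).reindex (finCongr hW)
    rw [Nat.mul_succ]
    refine ⟨Fin.append (Wᗮ.subtype ∘ e') (W.subtype ∘ w), ?_, ?_⟩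
    · exact (he'.comp_linearIsometry Wᗮ.subtypeₗᵢ).fin_append
        (w.orthonormal.comp_linearIsometry W.subtypeₗᵢ)
        fun i j => inner_left_of_mem_orthogonal (w j).2 (e' i).2
    · intro i j hij
      induction i using Fin.addCases <;> induction j using Fin.addCases <;>
        simp only [Fin.val_castAdd, Fin.val_natAdd] at hij
      · simpa [hrestrict] using hblock _ _ hij
      · simp only [Fin.append_left, Fin.append_right, Function.comp_apply]
        rw [η.map_vecCons_swap]
        exact neg_eq_zero.mpr (hisol _ (w _).2 _ (e' _).2)
      · simp [hisol _ (w _).2 _ (e' _).2]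
      · omega

section Comass

variable [FiniteDimensional ℝ E]

theorem bddAbove_comass_set (η : E [⋀^Fin 2]→ₗ[ℝ] ℝ) :
    BddAbove {r : ℝ | ∃ v : Fin 2 → E, Orthonormal ℝ v ∧ r = η v} := by
  let J := LinearMap.toContinuousLinearMap (skewOperator η)
  refine ⟨‖J‖, ?_⟩
  rintro _ ⟨v, hv, rfl⟩
  calc η v = η ![v 0, v 1] := congrArg η (FinVec.etaExpand_eq v).symm
    _ = ⟪J (v 0), v 1⟫ := (inner_skewOperator η _ _).symm
    _ ≤ ‖J (v 0)‖ * ‖v 1‖ := real_inner_le_norm _ _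
    _ ≤ ‖J‖ * ‖v 0‖ * ‖v 1‖ := by gcongr; exact J.le_opNorm _
    _ = ‖J‖ := by rw [hv.1 0, hv.1 1, mul_one, mul_one]

theorem abs_apply_le_comass (η : E [⋀^Fin 2]→ₗ[ℝ] ℝ) {v : Fin 2 → E} (hv : Orthonormal ℝ v) :
    |η v| ≤ comass η := by
  have hle {u : Fin 2 → E} (hu : Orthonormal ℝ u) : η u ≤ comass η :=
    le_csSup (bddAbove_comass_set η) ⟨u, hu, rfl⟩
  have hswap := η.map_swap v (zero_ne_one : (0 : Fin 2) ≠ 1)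
  rw [abs_le]
  exact ⟨by linarith [hle (hv.comp _ (Equiv.swap (0 : Fin 2) 1).injective)], hle hv⟩

end Comass

theorem abs_apply_eq_of_orthonormal [FiniteDimensional ℝ E] {k : ℕ} (hk : finrank ℝ E = k)
    (ω : E [⋀^Fin k]→ₗ[ℝ] ℝ) {v w : Fin k → E} (hv : Orthonormal ℝ v) (hw : Orthonormal ℝ w) :
    |ω v| = |ω w| := by
  have hspan {u : Fin k → E} (hu : Orthonormal ℝ u) : ⊤ ≤ span ℝ (Set.range u) :=
    (hu.linearIndependent.span_eq_top_of_card_eq_finrank' (by simp [hk])).ge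
  let bv := OrthonormalBasis.mk hv (hspan hv)
  let bw := OrthonormalBasis.mk hw (hspan hw)
  have hdet : |bw.toBasis.det v| = 1 := by
    rcases bw.det_to_matrix_orthonormalBasis_real bv with h | h <;>
      simp [bv, OrthonormalBasis.coe_mk] at h <;> simp [h]
  conv_lhs => rw [ω.eq_smul_basis_det bw.toBasis]
  simp [abs_mul, hdet, bw, OrthonormalBasis.coe_mk]

section Combinatorics

open Equiv Finset

def skipPair {m : ℕ} (k : ℕ) (i : Fin m) : Fin (2 + m) :=
  ⟨if (i : ℕ) < 2 * k then i else i + 2, by split <;> omega⟩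

theorem mem_range_skipPair {m k : ℕ} (hk : 2 * k ≤ m) {x : Fin (2 + m)} (hx : (x : ℕ) / 2 ≠ k) :
    x ∈ Set.range (skipPair (m := m) k) := by
  by_cases hlt : (x : ℕ) < 2 * k
  · exact ⟨⟨x, by omega⟩, Fin.ext (by simp [skipPair, hlt])⟩
  · exact ⟨⟨x - 2, by omega⟩, Fin.ext (by simp only [skipPair]; split_ifs <;> omega)⟩

theorem IsBlockDiagonal.comp_skipPair {m : ℕ} {η : E [⋀^Fin 2]→ₗ[ℝ] ℝ} {u : Fin (2 + m) → E}
    (hu : IsBlockDiagonal η u) (k : ℕ) : IsBlockDiagonal η (u ∘ skipPair k) :=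
  fun i j hij => hu _ _ (by simp only [skipPair]; split_ifs <;> omega)

theorem exists_perm_eq_comp {α β : Type*} [Finite α] {f g : α → β} (hf : Function.Injective f)
    (h : ∀ a, f a ∈ Set.range g) : ∃ π : Perm α, f = g ∘ π := by
  choose π hπ using h
  have hπ_inj : Function.Injective π := fun a b hab => hf (by rw [← hπ a, ← hπ b, hab])
  exact ⟨Equiv.ofBijective π hπ_inj.bijective_of_finite, funext fun a => (hπ a).symm⟩

theorem card_perm_apply_inl_le {α β : Type*} [Fintype α] [DecidableEq α] [Fintype β]
    [DecidableEq β] (f : α → α ⊕ β) :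
    #{σ : Perm (α ⊕ β) | ∀ i, σ (.inl i) = f i} ≤ (Fintype.card β).factorial := by
  set S := ({σ : Perm (α ⊕ β) | ∀ i, σ (.inl i) = f i} : Finset _)
  rcases S.eq_empty_or_nonempty with hS | ⟨τ, hτ⟩
  · simp [hS]
  -- `σ ↦ τ⁻¹ σ` embeds the fibre into the permutations fixing `α` pointwise
  calc #S = #(S.image (τ⁻¹ * ·)) := (card_image_of_injective _ (mul_right_injective τ⁻¹)).symm
    _ ≤ #{g : Perm (α ⊕ β) | ∀ x, ¬ x.isRight → g x = x} := by
        refine card_le_card fun g hg => ?_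
        obtain ⟨σ, hσ, rfl⟩ := mem_image.1 hg
        simp only [S, mem_filter, mem_univ, true_and] at hσ hτ ⊢
        rintro (i | j) h
        · simp [hσ i, ← hτ i]
        · simp at h
    _ = (Fintype.card β).factorial := by
        rw [← Fintype.card_subtype, ← Fintype.card_congr (Perm.subtypeEquivSubtypePerm _),
          Fintype.card_perm, Fintype.card_congr Equiv.sumIsRight]

theorem card_perm_inl_same_block_le (m : ℕ) :
    #{σ : Perm (Fin 2 ⊕ Fin m) | (finSumFinEquiv (σ (.inl 0)) : ℕ) / 2 =
      (finSumFinEquiv (σ (.inl 1)) : ℕ) / 2} ≤ (2 + m) * m.factorial := by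
  let t : Finset (Fin 2 → Fin (2 + m)) := {p | (p 0 : ℕ) / 2 = (p 1 : ℕ) / 2 ∧ p 0 ≠ p 1}
  -- a pair in a common block is determined by its first entry
  have ht : #t ≤ 2 + m := by
    refine (card_le_card_of_injOn (· 0) (fun _ _ => mem_univ _) fun p hp q hq hpq => ?_).trans
      (by simp)
    simp only [t, coe_filter, Set.mem_ofPred_eq, Fin.ext_iff] at hp hq hpq
    ext i
    fin_cases i
    · exact hpq
    · simp only [Fin.mk_one]; omega
  refine le_trans (card_le_mul_card_image_of_maps_to
    (f := fun σ : Perm (Fin 2 ⊕ Fin m) => finSumFinEquiv ∘ σ ∘ Sum.inl) (t := t)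
    (fun σ hσ => ?_) m.factorial fun p _ => ?_) ?_
  · simp only [mem_filter, mem_univ, true_and, t, Function.comp_apply] at hσ ⊢
    exact ⟨hσ, by simp⟩
  · refine (card_le_card fun σ hσ => ?_).trans
      ((card_perm_apply_inl_le (finSumFinEquiv.symm ∘ p)).trans (by simp))
    simp only [mem_filter, mem_univ, true_and] at hσ ⊢
    intro i
    rw [← hσ.2]
    simp
  · rw [mul_comm]
    exact Nat.mul_le_mul_right _ ht

end Combinatorics

section Wedge

open Equiv

theorem factorial_mul_factorial_mul_wedgeForm_apply {p q : ℕ} (ω : E [⋀^Fin p]→ₗ[ℝ] ℝ)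
    (τ : E [⋀^Fin q]→ₗ[ℝ] ℝ) (v : Fin (p + q) → E) :
    (p.factorial * q.factorial : ℝ) * wedgeForm ω τ v =
      ∑ σ : Perm (Fin p ⊕ Fin q), (Perm.sign σ : ℝ) *
        (ω (fun i => v (finSumFinEquiv (σ (.inl i)))) *
          τ (fun i => v (finSumFinEquiv (σ (.inr i))))) := by
  have h := congrArg (fun F => F (v ∘ finSumFinEquiv))
    (MultilinearMap.domCoprod_alternization_eq ω τ)
  simp only [AlternatingMap.smul_apply, Fintype.card_fin] at h
  have hw : wedgeForm ω τ v = TensorProduct.lid ℝ ℝ (ω.domCoprod τ (v ∘ finSumFinEquiv)) := rfl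
  rw [hw, ← Nat.cast_mul, ← nsmul_eq_mul, ← map_nsmul, ← h, MultilinearMap.alternatization_apply,
    map_sum]
  refine Finset.sum_congr rfl fun σ _ => ?_
  rw [MultilinearMap.domDomCongr_apply, MultilinearMap.domCoprod_apply, Units.smul_def,
    map_zsmul, TensorProduct.lid_tmul, smul_eq_mul, zsmul_eq_mul]
  rfl

theorem wedgePow_zero_apply (η : E [⋀^Fin 2]→ₗ[ℝ] ℝ) (v : Fin (2 * 0) → E) :
    wedgePow η 0 v = 1 :=
  rfl

theorem wedgePow_succ_apply (η : E [⋀^Fin 2]→ₗ[ℝ] ℝ) (n : ℕ) (v : Fin (2 * (n + 1)) → E) :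
    wedgePow η (n + 1) v = wedgeForm η (wedgePow η n) (v ∘ finCongr (by ring)) :=
  rfl

/-- If `σ` puts the first two slots into a common block, the other slots see `u` with that block
removed, up to order. -/
theorem abs_apply_inr_eq_skipPair {m : ℕ} (τ : E [⋀^Fin m]→ₗ[ℝ] ℝ) (u : Fin (2 + m) → E)
    {σ : Perm (Fin 2 ⊕ Fin m)}
    (hσ : (finSumFinEquiv (σ (.inl 0)) : ℕ) / 2 = (finSumFinEquiv (σ (.inl 1)) : ℕ) / 2) :
    |τ (fun i => u (finSumFinEquiv (σ (.inr i))))| =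
      |τ (u ∘ skipPair ((finSumFinEquiv (σ (.inl 0)) : ℕ) / 2))| := by
  have hval {x y : Fin 2 ⊕ Fin m} (h : x ≠ y) : (finSumFinEquiv x : ℕ) ≠ finSumFinEquiv y :=
    fun h' => h (finSumFinEquiv.injective (Fin.ext h'))
  have hab := hval (σ.injective.ne (Sum.inl_injective.ne (zero_ne_one (α := Fin 2))))
  have hlt := (finSumFinEquiv (σ (.inl 1))).isLt
  obtain ⟨π, hπ⟩ := exists_perm_eq_comp (f := fun i => finSumFinEquiv (σ (.inr i)))
    (g := skipPair ((finSumFinEquiv (σ (.inl 0)) : ℕ) / 2))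
    (finSumFinEquiv.injective.comp (σ.injective.comp Sum.inr_injective)) fun i => by
      have h0 := hval (σ.injective.ne (Sum.inr_ne_inl : (.inr i : Fin 2 ⊕ Fin m) ≠ .inl 0))
      have h1 := hval (σ.injective.ne (Sum.inr_ne_inl : (.inr i : Fin 2 ⊕ Fin m) ≠ .inl 1))
      exact mem_range_skipPair (by omega) (by omega)
  rw [show (fun i => u (finSumFinEquiv (σ (.inr i)))) = (u ∘ skipPair _) ∘ π from
    congrArg (u ∘ ·) hπ, τ.abs_map_comp_perm]

theorem abs_wedgeForm_apply_le {n : ℕ} {η : E [⋀^Fin 2]→ₗ[ℝ] ℝ}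
    {τ : E [⋀^Fin (2 * n)]→ₗ[ℝ] ℝ} {u : Fin (2 + 2 * n) → E} (hu : IsBlockDiagonal η u) {C B : ℝ}
    (hC : ∀ i j, |η ![u i, u j]| ≤ C) (hB : ∀ k : ℕ, |τ (u ∘ skipPair k)| ≤ B) :
    |wedgeForm η τ u| ≤ (n + 1) * (C * B) := by
  classical
  let S : Finset (Perm (Fin 2 ⊕ Fin (2 * n))) := {σ | (finSumFinEquiv (σ (.inl 0)) : ℕ) / 2 =
    (finSumFinEquiv (σ (.inl 1)) : ℕ) / 2}
  let F (σ : Perm (Fin 2 ⊕ Fin (2 * n))) : ℝ := (Perm.sign σ : ℝ) *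
    (η (fun i => u (finSumFinEquiv (σ (.inl i)))) * τ (fun i => u (finSumFinEquiv (σ (.inr i)))))
  have hCB : 0 ≤ C * B := mul_nonneg ((abs_nonneg _).trans (hC 0 0)) ((abs_nonneg _).trans (hB 0))
  -- only the permutations putting `η` on a block of `u` contribute, each by at most `C * B`
  have hF (σ) : |F σ| ≤ if σ ∈ S then C * B else 0 := by
    have hη : η (fun i => u (finSumFinEquiv (σ (.inl i)))) =
        η ![u (finSumFinEquiv (σ (.inl 0))), u (finSumFinEquiv (σ (.inl 1)))] :=
      congrArg η (FinVec.etaExpand_eq _).symm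
    split_ifs with hσ
    · rcases Int.units_eq_one_or (Perm.sign σ) with h | h <;>
      · simp only [F, h, abs_mul, hη, abs_apply_inr_eq_skipPair τ u (Finset.mem_filter.1 hσ).2]
        simpa using mul_le_mul (hC _ _) (hB _) (abs_nonneg _) ((abs_nonneg _).trans (hC 0 0))
    · simp [F, hη, hu _ _ (by simpa [S] using hσ)]
  have hsum : |∑ σ, F σ| ≤ (2 + 2 * n) * (2 * n).factorial * (C * B) := calc
    |∑ σ, F σ| ≤ ∑ σ, |F σ| := Finset.abs_sum_le_sum_abs _ _
    _ ≤ ∑ σ, if σ ∈ S then C * B else 0 := Finset.sum_le_sum fun σ _ => hF σ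
    _ = S.card * (C * B) := by
      rw [Finset.sum_ite_mem, Finset.univ_inter, Finset.sum_const, nsmul_eq_mul]
    _ ≤ (2 + 2 * n) * (2 * n).factorial * (C * B) := by
      gcongr
      exact_mod_cast card_perm_inl_same_block_le (2 * n)
  have hpos : (0 : ℝ) < 2 * (2 * n).factorial := by positivity
  refine le_of_mul_le_mul_left ?_ hpos
  calc 2 * (2 * n).factorial * |wedgeForm η τ u| = |∑ σ, F σ| := by
        rw [← factorial_mul_factorial_mul_wedgeForm_apply, Nat.factorial_two, Nat.cast_two,
          abs_mul, abs_of_pos hpos]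
    _ ≤ 2 * (2 * n).factorial * ((n + 1) * (C * B)) := by linarith

theorem abs_wedgePow_apply_le (η : E [⋀^Fin 2]→ₗ[ℝ] ℝ) {C : ℝ} (n : ℕ) {v : Fin (2 * n) → E}
    (hv : IsBlockDiagonal η v) (hC : ∀ i j, |η ![v i, v j]| ≤ C) :
    |wedgePow η n v| ≤ n.factorial * C ^ n := by
  induction n with
  | zero =>
    rw [wedgePow_zero_apply]
    simp
  | succ n ih =>
    rw [wedgePow_succ_apply]
    have hu : IsBlockDiagonal η (v ∘ finCongr (by ring : 2 + 2 * n = 2 * (n + 1))) :=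
      fun i j h => hv _ _ h
    calc _ ≤ (n + 1) * (C * (n.factorial * C ^ n)) :=
          abs_wedgeForm_apply_le hu (fun i j => hC _ _) fun k =>
            ih (hu.comp_skipPair k) fun i j => hC _ _
      _ = (n + 1).factorial * C ^ (n + 1) := by
          push_cast [Nat.factorial_succ]
          ring

end Wedge

/-- Wirtinger inequality: for a real 2-form `η` on an inner product space
of dimension `2n` with comass `‖η‖* ≤ 1`, the `n`-fold wedge power satisfies
`‖ηⁿ‖* ≤ n!`; i.e. the comass of `ηⁿ` is at most `n!` times the `n`-th power of the
comass of `η`. -/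
theorem wirtinger_inequality (n : ℕ) [FiniteDimensional ℝ E]
    (hE : Module.finrank ℝ E = 2 * n)
    (η : E [⋀^Fin 2]→ₗ[ℝ] ℝ) (hη : comass η ≤ 1) :
    comass (wedgePow η n) ≤ (n.factorial : ℝ) := by
  obtain ⟨e, he, hblock⟩ := exists_orthonormal_isBlockDiagonal hE η
  have hbound (i j) : |η ![e i, e j]| ≤ 1 := by
    rcases eq_or_ne i j with rfl | hij
    · simp [η.map_vecCons_self]
    · refine le_trans ?_ hη
      have h := abs_apply_le_comass η (he.comp ![i, j] (by simpa using hij))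
      rwa [← FinVec.map_eq] at h
  refine Real.sSup_le ?_ (by positivity)
  rintro _ ⟨v, hv, rfl⟩
  calc wedgePow η n v ≤ |wedgePow η n v| := le_abs_self _
    _ = |wedgePow η n e| := abs_apply_eq_of_orthonormal hE _ hv he
    _ ≤ n.factorial * 1 ^ n := abs_wedgePow_apply_le η n hblock hbound
    _ = n.factorial := by rw [one_pow, mul_one]
end

section
/- For the curvature endomorphism R_E in the twisted Weitzenböck formula, if the twisting bundle E is the pullback F*E₀ of a bundle by a smooth map F whose differential has singular values μ₁ ≥ ⋯ ≥ μₙ at a point, and the curvature of E₀ is bounded by 1/4 on unit bivectors, then the pointwise operator norm of R_E is bounded by (1/4)·Σ_{j≠k} μⱼ μₖ. -/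
/-- curvature term in the twisted Weitzenböck formula.  At a point, the
tangent space is an `n`-dimensional inner product space `V`, the spinor fibre is a normed
space `W` with Clifford multiplication `c : V → End(W)` (linear, with `‖c(v)‖ ≤ ‖v‖`),
and the twisting bundle is the pullback `F*E₀` by a map whose differential `A : V → V'`
has singular values `μ₁ ≥ ⋯ ≥ μₙ`.  The curvature of the pullback satisfies
`R^E(v,w) = R^{E₀}(Av, Aw)`, where the curvature `R₀` of `E₀` is antisymmetric and
bounded by `1/4` on unit bivectors.  Then the Weitzenböck curvature endomorphism
`R_E = (1/2)·Σ_{j,k} c(eⱼ)c(eₖ)·R^{E₀}(A eⱼ, A eₖ)` has operator norm at most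
`(1/4)·Σ_{j≠k} μⱼ μₖ`. -/
theorem weitzenboeck_curvature_bound
    (n : ℕ)
    (V V' : Type*) [NormedAddCommGroup V] [InnerProductSpace ℝ V]
    [NormedAddCommGroup V'] [InnerProductSpace ℝ V']
    [FiniteDimensional ℝ V] [FiniteDimensional ℝ V']
    (hV : Module.finrank ℝ V = n)
    (W : Type*) [NormedAddCommGroup W] [NormedSpace ℝ W]
    (c : V →ₗ[ℝ] (W →L[ℝ] W)) (hc : ∀ v : V, ‖c v‖ ≤ ‖v‖)
    (A : V →ₗ[ℝ] V') (μ : Fin n → ℝ) (hμ : Antitone μ) (hμ0 : ∀ i, 0 ≤ μ i)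
    (e : Fin n → V) (b : Fin n → V')
    (he : Orthonormal ℝ e) (hb : Orthonormal ℝ b)
    (hsvd : ∀ i, A (e i) = μ i • b i)
    (R₀ : V' →ₗ[ℝ] V' →ₗ[ℝ] (W →L[ℝ] W))
    (hanti : ∀ v w : V', R₀ v w = - R₀ w v)
    (hR₀ : ∀ v w : V', ‖R₀ v w‖ ≤ (1 / 4 : ℝ) * ‖v‖ * ‖w‖) :
    ‖(1 / 2 : ℝ) • ∑ j : Fin n, ∑ k : Fin n,
        ((c (e j)).comp ((c (e k)).comp (R₀ (A (e j)) (A (e k)))))‖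
      ≤ (1 / 4 : ℝ) * ∑ j : Fin n, ∑ k ∈ Finset.univ.filter (fun k => k ≠ j), μ j * μ k := by

  have he1 : ∀ i, ‖e i‖ = 1 := he.1
  have hb1 : ∀ i, ‖b i‖ = 1 := hb.1
  have hR0zero : ∀ v : V', R₀ v v = 0 := by
    intro v
    have h := hanti v v
    have h2 : (2:ℝ) • R₀ v v = 0 := by
      rw [two_smul]; nth_rewrite 2 [h]; simp
    calc R₀ v v = (1/2 : ℝ) • ((2:ℝ) • R₀ v v) := by rw [smul_smul]; norm_num
      _ = 0 := by rw [h2, smul_zero]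
  have hterm : ∀ j k, ‖((c (e j)).comp ((c (e k)).comp (R₀ (A (e j)) (A (e k)))))‖
      ≤ if k = j then 0 else (1/4 : ℝ) * (μ j * μ k) := by
    intro j k
    by_cases hjk : k = j
    · subst hjk; simp [hR0zero]
    · rw [if_neg hjk]
      have h1 : ‖R₀ (A (e j)) (A (e k))‖ ≤ (1/4 : ℝ) * (μ j * μ k) := by
        rw [hsvd, hsvd]
        simp only [map_smul, LinearMap.smul_apply, smul_smul]
        have hns2 := norm_smul (μ k * μ j) ((R₀ (b j)) (b k))
        rw [hns2, Real.norm_eq_abs, abs_of_nonneg (mul_nonneg (hμ0 k) (hμ0 j))]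
        have h2 := hR₀ (b j) (b k)
        rw [hb1, hb1] at h2
        have h3 := mul_le_mul_of_nonneg_left (show ‖(R₀ (b j)) (b k)‖ ≤ 1/4 by linarith)
          (mul_nonneg (hμ0 k) (hμ0 j))
        nlinarith [h3]
      have hcj : ‖c (e j)‖ ≤ 1 := (hc (e j)).trans_eq (he1 j)
      have hck : ‖c (e k)‖ ≤ 1 := (hc (e k)).trans_eq (he1 k)
      have hR0nn : (0:ℝ) ≤ ‖R₀ (A (e j)) (A (e k))‖ := norm_nonneg _
      calc ‖((c (e j)).comp ((c (e k)).comp (R₀ (A (e j)) (A (e k)))))‖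
          ≤ ‖c (e j)‖ * ‖(c (e k)).comp (R₀ (A (e j)) (A (e k)))‖ :=
            ContinuousLinearMap.opNorm_comp_le _ _
        _ ≤ ‖c (e j)‖ * (‖c (e k)‖ * ‖R₀ (A (e j)) (A (e k))‖) := by
            exact mul_le_mul_of_nonneg_left (ContinuousLinearMap.opNorm_comp_le _ _)
              (norm_nonneg _)
        _ ≤ 1 * (1 * ((1/4 : ℝ) * (μ j * μ k))) := by
            have h3 : ‖c (e k)‖ * ‖R₀ (A (e j)) (A (e k))‖ ≤ 1 * ((1/4:ℝ) * (μ j * μ k)) :=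
              mul_le_mul hck h1 hR0nn one_pos.le
            exact mul_le_mul hcj h3 (mul_nonneg (norm_nonneg _) hR0nn) one_pos.le
        _ = (1/4 : ℝ) * (μ j * μ k) := by ring
  have hS : ‖∑ j : Fin n, ∑ k : Fin n,
        ((c (e j)).comp ((c (e k)).comp (R₀ (A (e j)) (A (e k)))))‖
      ≤ ∑ j : Fin n, ∑ k ∈ Finset.univ.filter (fun k => k ≠ j), (1/4 : ℝ) * (μ j * μ k) := by
    refine (norm_sum_le _ _).trans (Finset.sum_le_sum fun j _ => ?_)
    refine (norm_sum_le _ _).trans ?_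
    have : ∑ k ∈ Finset.univ.filter (fun k => k ≠ j), (1/4 : ℝ) * (μ j * μ k)
        = ∑ k : Fin n, if k = j then 0 else (1/4 : ℝ) * (μ j * μ k) := by
      rw [Finset.sum_filter]
      exact Finset.sum_congr rfl fun k _ => by by_cases h : k = j <;> simp [h]
    rw [this]
    exact Finset.sum_le_sum fun k _ => hterm j k
  have hTnn : (0:ℝ) ≤ ∑ j : Fin n, ∑ k ∈ Finset.univ.filter (fun k => k ≠ j), μ j * μ k :=
    Finset.sum_nonneg fun j _ => Finset.sum_nonneg fun k _ => mul_nonneg (hμ0 j) (hμ0 k)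
  have hns := norm_smul ((1:ℝ)/2) (∑ j : Fin n, ∑ k : Fin n,
        ((c (e j)).comp ((c (e k)).comp (R₀ (A (e j)) (A (e k))))))
  rw [hns]
  have : ∑ j : Fin n, ∑ k ∈ Finset.univ.filter (fun k => k ≠ j), (1/4 : ℝ) * (μ j * μ k)
      = (1/4 : ℝ) * ∑ j : Fin n, ∑ k ∈ Finset.univ.filter (fun k => k ≠ j), μ j * μ k := by
    rw [Finset.mul_sum]
    exact Finset.sum_congr rfl fun j _ => by rw [Finset.mul_sum]
  rw [this] at hS
  have hn : ‖(1/2 : ℝ)‖ = (1/2 : ℝ) := by norm_num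
  rw [hn]
  nlinarith [norm_nonneg (∑ j : Fin n, ∑ k : Fin n,
        ((c (e j)).comp ((c (e k)).comp (R₀ (A (e j)) (A (e k))))))]
end
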